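/- For every integer a ≥ 2 and every m ≥ 1, the greatest common divisor of Φ_m(a) and m is either 1 or a prime number p; in the latter case m = p^e · o_p(a) for some e ≥ 1. -/

import Mathlib

/-!
If a prime `p` divides `Φ_m(a)` and `m = p ^ k * m'` with `p ∤ m'`, then `a mod p` is a primitive
`m'`-th root of unity, so `o_p(a) = m'` divides `p - 1`. Hence every other prime factor of `m` is
smaller than `p`: at most one prime, the largest prime factor of `m`, divides `gcd(Φ_m(a), m)`.
It divides the gcd only once: if `p ^ 2 ∣ m`, then `x = a ^ (m / p) ≡ 1 (mod p ^ 2)`, and `Φ_m(a)`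
divides `1 + x + ⋯ + x ^ (p - 1) ≡ p (mod p ^ 2)`.
-/

open Polynomial Finset

theorem Polynomial.cyclotomic_mul_dvd_geom_sum_X_pow {R : Type*} [CommRing R] [IsDomain R]
    {n p : ℕ} (hn : n ≠ 0) (hp : 1 < p) :
    cyclotomic (n * p) R ∣ ∑ i ∈ range p, (X ^ n) ^ i := by
  have hmem : n ∈ (n * p).properDivisors :=
    Nat.mem_properDivisors.2
      ⟨dvd_mul_right n p, lt_mul_of_one_lt_right (Nat.pos_of_ne_zero hn) hp⟩
  have hfactor : (X ^ (n * p) - 1 : R[X]) = (X ^ n - 1) * ∑ i ∈ range p, (X ^ n) ^ i := by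
    rw [pow_mul, mul_comm, geom_sum_mul]
  have h := X_pow_sub_one_mul_cyclotomic_dvd_X_pow_sub_one_of_dvd R hmem
  rw [hfactor] at h
  exact (mul_dvd_mul_iff_left (X_pow_sub_C_ne_zero (Nat.pos_of_ne_zero hn) 1)).1 h

theorem not_sq_dvd_geom_sum {p : ℕ} (hp : p.Prime) {x : ℤ} (hx : (p : ℤ) ^ 2 ∣ x - 1) :
    ¬ (p : ℤ) ^ 2 ∣ ∑ i ∈ range p, x ^ i := by
  rw [← geom_sum₂_with_one, dvd_geom_sum₂_iff_of_dvd_sub hx, one_pow, mul_one, pow_two]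
  intro h
  have hp' := Nat.prime_iff_prime_int.mp hp
  exact hp'.not_isUnit <| isUnit_of_dvd_one <|
    (mul_dvd_mul_iff_left hp'.ne_zero).1 (by rwa [mul_one])

theorem Nat.eq_of_unique_prime_dvd_of_not_sq_dvd {n p : ℕ} (hn : n ≠ 0)
    (h : ∀ {q : ℕ}, q.Prime → q ∣ n → q = p) (hpn : p ∣ n) (hsq : ¬ p ^ 2 ∣ n) : n = p := by
  obtain ⟨e, rfl⟩ : ∃ e, n = p ^ e := ⟨_, Nat.eq_prime_pow_of_unique_prime_dvd hn h⟩
  rcases e with _ | _ | e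
  · simp_all
  · exact pow_one p
  · exact absurd (pow_dvd_pow p (by omega)) hsq

section

variable {p : ℕ} [Fact p.Prime] {m : ℕ} {a : ℤ}

theorem isPrimitiveRoot_ordCompl_of_dvd_cyclotomic_eval (hm : m ≠ 0)
    (h : (p : ℤ) ∣ (cyclotomic m ℤ).eval a) : IsPrimitiveRoot (a : ZMod p) (ordCompl[p] m) := by
  have : NeZero ((ordCompl[p] m : ℕ) : ZMod p) :=
    ⟨(ZMod.natCast_eq_zero_iff _ p).not.2 (Nat.not_dvd_ordCompl Fact.out hm)⟩
  refine (isRoot_cyclotomic_prime_pow_mul_iff_of_charP (k := m.factorization p)).1 ?_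
  rw [Nat.ordProj_mul_ordCompl_eq_self, IsRoot, ← map_cyclotomic_int, eval_intCast_map,
    Int.cast_id, eq_intCast, ZMod.intCast_zmod_eq_zero_iff_dvd]
  exact h

theorem orderOf_eq_ordCompl_of_dvd_cyclotomic_eval (hm : m ≠ 0)
    (h : (p : ℤ) ∣ (cyclotomic m ℤ).eval a) : orderOf (a : ZMod p) = ordCompl[p] m :=
  (isPrimitiveRoot_ordCompl_of_dvd_cyclotomic_eval hm h).eq_orderOf.symm

theorem orderOf_dvd_sub_one_of_dvd_cyclotomic_eval (hm : m ≠ 0)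
    (h : (p : ℤ) ∣ (cyclotomic m ℤ).eval a) : orderOf (a : ZMod p) ∣ p - 1 := by
  have hprim := isPrimitiveRoot_ordCompl_of_dvd_cyclotomic_eval hm h
  exact ZMod.orderOf_dvd_card_sub_one (hprim.ne_zero (Nat.ordCompl_pos p hm).ne')

theorem le_of_prime_dvd_of_dvd_cyclotomic_eval (hm : m ≠ 0)
    (h : (p : ℤ) ∣ (cyclotomic m ℤ).eval a) {q : ℕ} (hq : q.Prime) (hqm : q ∣ m) : q ≤ p := by
  obtain rfl | hqp := eq_or_ne q p
  · rfl
  have hpq : ¬ p ∣ q := fun hpq => hqp ((Nat.prime_dvd_prime_iff_eq Fact.out hq).1 hpq).symm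
  have hq_dvd : q ∣ p - 1 := by
    have hq_dvd_ord := Nat.dvd_ordCompl_of_dvd_not_dvd hqm hpq
    rw [← orderOf_eq_ordCompl_of_dvd_cyclotomic_eval hm h] at hq_dvd_ord
    exact hq_dvd_ord.trans (orderOf_dvd_sub_one_of_dvd_cyclotomic_eval hm h)
  have := Nat.le_of_dvd (Nat.sub_pos_of_lt (Nat.Prime.one_lt Fact.out)) hq_dvd
  omega

theorem not_sq_dvd_cyclotomic_eval (hm : m ≠ 0) (hpm : p ^ 2 ∣ m)
    (h : (p : ℤ) ∣ (cyclotomic m ℤ).eval a) : ¬ (p : ℤ) ^ 2 ∣ (cyclotomic m ℤ).eval a := by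
  have hp : p.Prime := Fact.out
  set o := orderOf (a : ZMod p) with ho
  have hcop : (p ^ 2).Coprime o := by
    rw [ho, orderOf_eq_ordCompl_of_dvd_cyclotomic_eval hm h]
    exact (Nat.coprime_ordCompl hp hm).pow_left 2
  have hom : o ∣ m := by
    rw [ho, orderOf_eq_ordCompl_of_dvd_cyclotomic_eval hm h]
    exact Nat.ordCompl_dvd m p
  obtain ⟨t, rfl⟩ := hcop.mul_dvd_of_dvd_of_dvd hpm hom
  have hr : (p : ℤ) ∣ a ^ (o * t) - 1 := by
    rw [← ZMod.intCast_zmod_eq_zero_iff_dvd]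
    push_cast
    rw [orderOf_dvd_iff_pow_eq_one.1 (dvd_mul_right o t), sub_self]
  have hx : (p : ℤ) ^ 2 ∣ a ^ (p * (o * t)) - 1 := by
    simpa [← pow_mul, mul_comm p] using dvd_sub_pow_of_dvd_sub hr 1
  have hΦ : (cyclotomic (p ^ 2 * o * t) ℤ).eval a ∣ ∑ i ∈ range p, (a ^ (p * (o * t))) ^ i := by
    have hmul : p ^ 2 * o * t = p * (o * t) * p := by ring
    rw [hmul] at hm ⊢
    simpa [eval_finsetSum] using eval_dvd (x := a)
      (cyclotomic_mul_dvd_geom_sum_X_pow (R := ℤ) (left_ne_zero_of_mul hm) hp.one_lt)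
  exact fun hsq => not_sq_dvd_geom_sum hp hx (hsq.trans hΦ)

end

theorem gcd_cyclotomic_eval_eq_one_or_prime_general
    (a : ℤ) (m : ℕ) (hm : 1 ≤ m) :
    Int.gcd ((Polynomial.cyclotomic m ℤ).eval a) (m : ℤ) = 1 ∨
      ∃ p : ℕ, p.Prime ∧
        Int.gcd ((Polynomial.cyclotomic m ℤ).eval a) (m : ℤ) = p ∧
        ∃ e : ℕ, 1 ≤ e ∧ m = p ^ e * orderOf ((a : ZMod p)) := by
  set g := Int.gcd ((cyclotomic m ℤ).eval a) m
  have hm0 : m ≠ 0 := Nat.one_le_iff_ne_zero.1 hm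
  have hgm : g ∣ m := Int.natCast_dvd_natCast.1 (Int.gcd_dvd_right _ _)
  have hgΦ : ∀ {d : ℕ}, d ∣ g → (d : ℤ) ∣ (cyclotomic m ℤ).eval a :=
    fun hd => (Int.natCast_dvd_natCast.2 hd).trans (Int.gcd_dvd_left _ _)
  refine or_iff_not_imp_left.2 fun hg1 => ?_
  set p := g.minFac
  have hp : p.Prime := Nat.minFac_prime hg1
  have : Fact p.Prime := ⟨hp⟩
  have hpg : p ∣ g := Nat.minFac_dvd g
  -- a prime dividing both `m` and `Φ_m(a)` is the largest prime factor of `m`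
  have huniq : ∀ {q : ℕ}, q.Prime → q ∣ g → q = p := fun {q} hq hqg =>
    have : Fact q.Prime := ⟨hq⟩
    le_antisymm (le_of_prime_dvd_of_dvd_cyclotomic_eval hm0 (hgΦ hpg) hq (hqg.trans hgm))
      (le_of_prime_dvd_of_dvd_cyclotomic_eval hm0 (hgΦ hqg) hp (hpg.trans hgm))
  have hsq : ¬ p ^ 2 ∣ g := fun hsq =>
    not_sq_dvd_cyclotomic_eval hm0 (hsq.trans hgm) (hgΦ hpg) (by exact_mod_cast hgΦ hsq)
  refine ⟨p, hp, Nat.eq_of_unique_prime_dvd_of_not_sq_dvd (ne_zero_of_dvd_ne_zero hm0 hgm)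
    huniq hpg hsq, m.factorization p, hp.factorization_pos_of_dvd hm0 (hpg.trans hgm), ?_⟩
  rw [orderOf_eq_ordCompl_of_dvd_cyclotomic_eval hm0 (hgΦ hpg), Nat.ordProj_mul_ordCompl_eq_self]

/-- For every `a ≥ 2` and `m ≥ 1`, `gcd(Φ_m(a), m)` equals `1` or a prime
`p`, in which case `m = p ^ e * o_p(a)` with `e ≥ 1`. -/
theorem gcd_cyclotomic_eval_eq_one_or_prime
    (a : ℤ) (ha : 2 ≤ a) (m : ℕ) (hm : 1 ≤ m) :
    Int.gcd ((Polynomial.cyclotomic m ℤ).eval a) (m : ℤ) = 1 ∨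
      ∃ p : ℕ, p.Prime ∧
        Int.gcd ((Polynomial.cyclotomic m ℤ).eval a) (m : ℤ) = p ∧
        ∃ e : ℕ, 1 ≤ e ∧ m = p ^ e * orderOf ((a : ZMod p)) :=
  gcd_cyclotomic_eval_eq_one_or_prime_general a m hm
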